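/- Let D = diag(λ₁,…,λ_d) with λ₁ ≥ … ≥ λ_d > 0, let V ≥ 1/√d, and let v^{(1)},…,v^{(m+1)} ∈ ℝ^d with ‖v^{(k)}‖_∞ ≤ V for all k. Set A^{(m)} = D + √D (Σ_{k=1}^m v^{(k)}(v^{(k)})ᵀ) √D and A^{(m+1)} = A^{(m)} + √D v^{(m+1)}(v^{(m+1)})ᵀ √D. Let (e₁^{(m)},…,e_d^{(m)}) and (e₁^{(m+1)},…,e_d^{(m+1)}) be orthonormal systems of eigenvectors of A^{(m)} and A^{(m+1)} respectively, ordered by decreasing eigenvalues. Suppose there is C_m ≥ 1 such that |[e_i^{(m)}]_j| ≤ C_m √(min(λ_i,λ_j)/max(λ_i,λ_j)) for all i,j. Then |⟨e_i^{(m+1)}, e_k^{(m)}⟩| ≤ 5 d⁶ V⁴ C_m⁴ · √(1 + d m V²) · √(min(λ_i,λ_k)/max(λ_i,λ_k)) for all i,k ∈ {1,…,d}. -/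

import Mathlib

/-!
Write `A⁽ᵐ⁺¹⁾ = A⁽ᵐ⁾ + w wᵀ` with `w = √D v⁽ᵐ⁺¹⁾`. Pairing the eigenvector equations of
`A⁽ᵐ⁺¹⁾` and `A⁽ᵐ⁾` gives the rank-one identity
`(νᵢ⁽ᵐ⁺¹⁾ - νₖ⁽ᵐ⁾) ⟨eᵢ⁽ᵐ⁺¹⁾, eₖ⁽ᵐ⁾⟩ = ⟨w, eᵢ⁽ᵐ⁺¹⁾⟩ ⟨w, eₖ⁽ᵐ⁾⟩`.
Cauchy–Schwarz gives `D ≤ A⁽ᵐ⁾ ≤ A⁽ᵐ⁺¹⁾ ≤ K D` as quadratic forms, with `K = 1 + (m+1) d V²`,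
so by the Courant–Fischer comparison every ordered eigenvalue satisfies `λⱼ ≤ νⱼ ≤ K λⱼ`.
Hence `⟨w, eᵢ⁽ᵐ⁺¹⁾⟩² ≤ νᵢ⁽ᵐ⁺¹⁾ ≤ K λᵢ`, while the entrywise bound on `eₖ⁽ᵐ⁾` gives
`|⟨w, eₖ⁽ᵐ⁾⟩| ≤ d V Cₘ √λₖ`. When `λᵢ` and `λₖ` differ by a factor of at least `2K`, the
eigenvalue gap is at least half the larger one and the identity yields the bound; otherwise
`√(min/max) ≥ 1/√(2K)` and the trivial bound `|⟨eᵢ⁽ᵐ⁺¹⁾, eₖ⁽ᵐ⁾⟩| ≤ 1` suffices.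
-/

open Matrix Finset

section OrthonormalRows

variable {n : Type*} [Fintype n] [DecidableEq n] {e : n → n → ℝ}

lemma transpose_mul_self_eq_one_of_orthonormal
    (he : ∀ i j, e i ⬝ᵥ e j = if i = j then (1 : ℝ) else 0) :
    (Matrix.of e)ᵀ * Matrix.of e = 1 := by
  refine mul_eq_one_comm.mp ?_
  ext i j
  simpa [Matrix.mul_apply, Matrix.one_apply, dotProduct] using he i j

lemma sum_dotProduct_smul_eq_self
    (he : ∀ i j, e i ⬝ᵥ e j = if i = j then (1 : ℝ) else 0) (x : n → ℝ) :
    ∑ i, (e i ⬝ᵥ x) • e i = x := by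
  have h := congrArg (· *ᵥ x) (transpose_mul_self_eq_one_of_orthonormal he)
  simp only [← mulVec_mulVec, one_mulVec, mulVec_transpose, vecMul_eq_sum] at h
  exact h

lemma sum_sq_dotProduct_eq_dotProduct_self
    (he : ∀ i j, e i ⬝ᵥ e j = if i = j then (1 : ℝ) else 0) (x : n → ℝ) :
    ∑ i, (e i ⬝ᵥ x) ^ 2 = x ⬝ᵥ x := by
  calc ∑ i, (e i ⬝ᵥ x) ^ 2 = (∑ i, (e i ⬝ᵥ x) • e i) ⬝ᵥ x := by
        simp only [sum_dotProduct, smul_dotProduct, smul_eq_mul, sq]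
    _ = x ⬝ᵥ x := by rw [sum_dotProduct_smul_eq_self he x]

lemma dotProduct_mulVec_self_eq_sum {A : Matrix n n ℝ} {μ : n → ℝ}
    (he : ∀ i j, e i ⬝ᵥ e j = if i = j then (1 : ℝ) else 0)
    (heig : ∀ i, A *ᵥ e i = μ i • e i) (x : n → ℝ) :
    x ⬝ᵥ A *ᵥ x = ∑ i, μ i * (e i ⬝ᵥ x) ^ 2 := by
  calc x ⬝ᵥ A *ᵥ x = x ⬝ᵥ A *ᵥ ∑ i, (e i ⬝ᵥ x) • e i := by rw [sum_dotProduct_smul_eq_self he x]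
    _ = ∑ i, μ i * (e i ⬝ᵥ x) ^ 2 := by
        simp only [mulVec_sum, mulVec_smul, heig, smul_smul, dotProduct_sum, dotProduct_smul,
          smul_eq_mul]
        exact sum_congr rfl fun i _ => by rw [dotProduct_comm x]; ring

end OrthonormalRows

section MinMax

variable {n : Type*} [Fintype n] [DecidableEq n]

lemma single_one_dotProduct_single_one (i j : n) :
    Pi.single i (1 : ℝ) ⬝ᵥ Pi.single j 1 = if i = j then 1 else 0 := by
  simp [Pi.single_apply, eq_comm]

lemma diagonal_mulVec_single_one (lam : n → ℝ) (i : n) :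
    diagonal lam *ᵥ Pi.single i 1 = lam i • Pi.single i 1 := by
  rw [diagonal_mulVec_single, ← Pi.single_smul, smul_eq_mul, mul_one]

lemma dotProduct_diagonal_mulVec_self (lam x : n → ℝ) :
    x ⬝ᵥ diagonal lam *ᵥ x = ∑ j, lam j * x j ^ 2 := by
  simp only [dotProduct, mulVec_diagonal]
  exact sum_congr rfl fun j _ => by ring

variable [LinearOrder n]

lemma exists_ne_zero_dotProduct_eq_zero_of_lt_of_gt (e f : n → n → ℝ) (k : n) :
    ∃ x ≠ 0, (∀ j, k < j → e j ⬝ᵥ x = 0) ∧ ∀ j, j < k → f j ⬝ᵥ x = 0 := by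
  -- the constraints are the rows of a square matrix whose row `k` vanishes
  let C : Matrix n n ℝ := Matrix.of fun j => if j < k then f j else if k < j then e j else 0
  have hC : C.det = 0 := det_eq_zero_of_row_eq_zero k fun l => by simp [C]
  obtain ⟨x, hx, hCx⟩ := exists_mulVec_eq_zero_iff.mpr hC
  refine ⟨x, hx, fun j hj => ?_, fun j hj => ?_⟩
  · simpa [C, mulVec, hj, hj.not_gt] using congrFun hCx j
  · simpa [C, mulVec, hj] using congrFun hCx j

variable {e : n → n → ℝ} {A : Matrix n n ℝ} {μ : n → ℝ}

lemma mul_dotProduct_self_le_of_dotProduct_eq_zero {k : n} {x : n → ℝ}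
    (he : ∀ i j, e i ⬝ᵥ e j = if i = j then (1 : ℝ) else 0)
    (heig : ∀ i, A *ᵥ e i = μ i • e i) (hμ : Antitone μ)
    (hx : ∀ j, k < j → e j ⬝ᵥ x = 0) : μ k * (x ⬝ᵥ x) ≤ x ⬝ᵥ A *ᵥ x := by
  rw [dotProduct_mulVec_self_eq_sum he heig, ← sum_sq_dotProduct_eq_dotProduct_self he, mul_sum]
  refine sum_le_sum fun j _ => ?_
  rcases le_or_gt j k with hjk | hkj
  · exact mul_le_mul_of_nonneg_right (hμ hjk) (sq_nonneg _)
  · simp [hx j hkj]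

lemma dotProduct_mulVec_self_le_of_dotProduct_eq_zero {k : n} {x : n → ℝ}
    (he : ∀ i j, e i ⬝ᵥ e j = if i = j then (1 : ℝ) else 0)
    (heig : ∀ i, A *ᵥ e i = μ i • e i) (hμ : Antitone μ)
    (hx : ∀ j, j < k → e j ⬝ᵥ x = 0) : x ⬝ᵥ A *ᵥ x ≤ μ k * (x ⬝ᵥ x) := by
  rw [dotProduct_mulVec_self_eq_sum he heig, ← sum_sq_dotProduct_eq_dotProduct_self he, mul_sum]
  refine sum_le_sum fun j _ => ?_
  rcases le_or_gt k j with hkj | hjk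
  · exact mul_le_mul_of_nonneg_right (hμ hkj) (sq_nonneg _)
  · simp [hx j hjk]

lemma eigenvalue_le_of_dotProduct_mulVec_le {B : Matrix n n ℝ} {ξ : n → ℝ} {f : n → n → ℝ}
    (he : ∀ i j, e i ⬝ᵥ e j = if i = j then (1 : ℝ) else 0)
    (heig : ∀ i, A *ᵥ e i = μ i • e i) (hμ : Antitone μ)
    (hf : ∀ i j, f i ⬝ᵥ f j = if i = j then (1 : ℝ) else 0)
    (hfeig : ∀ i, B *ᵥ f i = ξ i • f i) (hξ : Antitone ξ)
    (hAB : ∀ x, x ⬝ᵥ A *ᵥ x ≤ x ⬝ᵥ B *ᵥ x) (k : n) : μ k ≤ ξ k := by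
  obtain ⟨x, hx, hxe, hxf⟩ := exists_ne_zero_dotProduct_eq_zero_of_lt_of_gt e f k
  have hxx : 0 < x ⬝ᵥ x := by simpa using dotProduct_star_self_pos_iff.mpr hx
  refine le_of_mul_le_mul_right ?_ hxx
  calc μ k * (x ⬝ᵥ x) ≤ x ⬝ᵥ A *ᵥ x := mul_dotProduct_self_le_of_dotProduct_eq_zero he heig hμ hxe
    _ ≤ x ⬝ᵥ B *ᵥ x := hAB x
    _ ≤ ξ k * (x ⬝ᵥ x) := dotProduct_mulVec_self_le_of_dotProduct_eq_zero hf hfeig hξ hxf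

end MinMax

section LowRankUpdate

variable {n : Type*}

lemma isSymm_diagonal_add_sum_vecMulVec [DecidableEq n] {ι : Type*} [Fintype ι] (lam : n → ℝ)
    (w : ι → n → ℝ) : (diagonal lam + ∑ k, vecMulVec (w k) (w k)).IsSymm :=
  (isSymm_diagonal lam).add (by simp [IsSymm, transpose_sum, transpose_vecMulVec])

variable [Fintype n]

lemma diagonal_mul_vecMulVec_mul_diagonal {α : Type*} [CommSemiring α] [DecidableEq n]
    (s u : n → α) :
    diagonal s * vecMulVec u u * diagonal s
      = vecMulVec (fun i => s i * u i) (fun i => s i * u i) := by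
  ext i j
  simp only [diagonal_mul, mul_diagonal, vecMulVec_apply]
  ring

lemma dotProduct_vecMulVec_mulVec (x w y : n → ℝ) :
    x ⬝ᵥ vecMulVec w w *ᵥ y = (w ⬝ᵥ x) * (w ⬝ᵥ y) := by
  rw [vecMulVec_mulVec, op_smul_eq_smul, dotProduct_smul, smul_eq_mul, dotProduct_comm x, mul_comm]

lemma dotProduct_add_sum_vecMulVec_mulVec_self {ι : Type*} [Fintype ι] (D : Matrix n n ℝ)
    (w : ι → n → ℝ) (x : n → ℝ) :
    x ⬝ᵥ (D + ∑ k, vecMulVec (w k) (w k)) *ᵥ x = x ⬝ᵥ D *ᵥ x + ∑ k, (w k ⬝ᵥ x) ^ 2 := by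
  simp only [add_mulVec, sum_mulVec, dotProduct_add, dotProduct_sum, dotProduct_vecMulVec_mulVec,
    sq]

lemma sub_mul_dotProduct_eq_of_add_vecMulVec {A : Matrix n n ℝ} (hA : A.IsSymm) {w e f : n → ℝ}
    {ν ν' : ℝ} (he : A *ᵥ e = ν • e) (hf : (A + vecMulVec w w) *ᵥ f = ν' • f) :
    (ν' - ν) * (f ⬝ᵥ e) = (w ⬝ᵥ f) * (w ⬝ᵥ e) := by
  have hAe : f ⬝ᵥ (A + vecMulVec w w) *ᵥ e = ν * (f ⬝ᵥ e) + (w ⬝ᵥ f) * (w ⬝ᵥ e) := by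
    rw [add_mulVec, dotProduct_add, he, dotProduct_smul, smul_eq_mul, dotProduct_vecMulVec_mulVec]
  have hAf : f ⬝ᵥ (A + vecMulVec w w) *ᵥ e = ν' * (f ⬝ᵥ e) := by
    rw [dotProduct_mulVec, ← mulVec_transpose, (hA.add (transpose_vecMulVec w w)).eq, hf,
      smul_dotProduct, smul_eq_mul]
  linarith

lemma sq_dotProduct_le_of_add_vecMulVec {A : Matrix n n ℝ} (hA : ∀ x, 0 ≤ x ⬝ᵥ A *ᵥ x)
    {w f : n → ℝ} {ν : ℝ} (hf1 : f ⬝ᵥ f = 1) (hf : (A + vecMulVec w w) *ᵥ f = ν • f) :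
    (w ⬝ᵥ f) ^ 2 ≤ ν := by
  have h : f ⬝ᵥ (A + vecMulVec w w) *ᵥ f = f ⬝ᵥ A *ᵥ f + (w ⬝ᵥ f) ^ 2 := by
    rw [add_mulVec, dotProduct_add, dotProduct_vecMulVec_mulVec, sq]
  rw [hf, dotProduct_smul, hf1, smul_eq_mul, mul_one] at h
  linarith [hA f]

variable [DecidableEq n] {ι : Type*} [Fintype ι] {lam : n → ℝ} {w : ι → n → ℝ}

lemma dotProduct_diagonal_add_sum_vecMulVec_mulVec_self_nonneg (hlam : ∀ j, 0 ≤ lam j)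
    (x : n → ℝ) :
    0 ≤ x ⬝ᵥ (diagonal lam + ∑ k, vecMulVec (w k) (w k)) *ᵥ x := by
  rw [dotProduct_add_sum_vecMulVec_mulVec_self, dotProduct_diagonal_mulVec_self]
  exact add_nonneg (sum_nonneg fun j _ => mul_nonneg (hlam j) (sq_nonneg _))
    (sum_nonneg fun _ _ => sq_nonneg _)

variable [LinearOrder n] {c : ℝ} {e : n → n → ℝ} {μ : n → ℝ}

lemma eigenvalue_mem_Icc_of_diagonal_add_sum_vecMulVec (hlam : Antitone lam) (hc : 0 ≤ c)
    (hw : ∀ k x, (w k ⬝ᵥ x) ^ 2 ≤ c * (x ⬝ᵥ diagonal lam *ᵥ x))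
    (he : ∀ i j, e i ⬝ᵥ e j = if i = j then (1 : ℝ) else 0)
    (heig : ∀ i, (diagonal lam + ∑ k, vecMulVec (w k) (w k)) *ᵥ e i = μ i • e i)
    (hμ : Antitone μ) (i : n) :
    lam i ≤ μ i ∧ μ i ≤ (1 + Fintype.card ι * c) * lam i := by
  refine ⟨eigenvalue_le_of_dotProduct_mulVec_le single_one_dotProduct_single_one
      (diagonal_mulVec_single_one lam) hlam he heig hμ (fun x => ?_) i,
    eigenvalue_le_of_dotProduct_mulVec_le he heig hμ single_one_dotProduct_single_one
      (diagonal_mulVec_single_one _) (hlam.const_mul (by positivity)) (fun x => ?_) i⟩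
  · rw [dotProduct_add_sum_vecMulVec_mulVec_self]
    exact le_add_of_nonneg_right (sum_nonneg fun k _ => sq_nonneg _)
  · have hsum : ∑ k, (w k ⬝ᵥ x) ^ 2 ≤ Fintype.card ι * c * (x ⬝ᵥ diagonal lam *ᵥ x) := by
      simpa [mul_assoc] using sum_le_sum fun k (_ : k ∈ univ) => hw k x
    have hdiag : x ⬝ᵥ diagonal (fun j => (1 + Fintype.card ι * c) * lam j) *ᵥ x
        = (1 + Fintype.card ι * c) * (x ⬝ᵥ diagonal lam *ᵥ x) := by
      simp only [dotProduct_diagonal_mulVec_self, mul_sum, mul_assoc]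
    rw [dotProduct_add_sum_vecMulVec_mulVec_self, hdiag]
    linarith

end LowRankUpdate

section EntryBounds

variable {n : Type*} [Fintype n] {lam : n → ℝ}

lemma abs_dotProduct_le_one {x y : n → ℝ} (hx : x ⬝ᵥ x = 1) (hy : y ⬝ᵥ y = 1) :
    |x ⬝ᵥ y| ≤ 1 := by
  rw [← sq_le_one_iff_abs_le_one]
  have h := sum_mul_sq_le_sq_mul_sq univ x y
  simp only [dotProduct, ← sq] at h hx hy ⊢
  rwa [hx, hy, mul_one] at h

lemma sq_dotProduct_sqrt_mul_le [DecidableEq n] (hlam : ∀ j, 0 ≤ lam j) {v : n → ℝ} {V : ℝ}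
    (hv : ∀ j, |v j| ≤ V) (x : n → ℝ) :
    ((fun j => √(lam j) * v j) ⬝ᵥ x) ^ 2
      ≤ Fintype.card n * V ^ 2 * (x ⬝ᵥ diagonal lam *ᵥ x) := by
  rw [dotProduct_diagonal_mulVec_self]
  have hv2 : ∑ j, v j ^ 2 ≤ Fintype.card n * V ^ 2 := by
    simpa using sum_le_sum fun j (_ : j ∈ univ) =>
      (sq_abs (v j)).symm.le.trans (pow_le_pow_left₀ (abs_nonneg _) (hv j) 2)
  calc ((fun j => √(lam j) * v j) ⬝ᵥ x) ^ 2 = (∑ j, v j * (√(lam j) * x j)) ^ 2 := by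
        simp only [dotProduct, mul_comm, mul_left_comm]
    _ ≤ (∑ j, v j ^ 2) * ∑ j, (√(lam j) * x j) ^ 2 := sum_mul_sq_le_sq_mul_sq _ _ _
    _ = (∑ j, v j ^ 2) * ∑ j, lam j * x j ^ 2 := by
        simp only [mul_pow, Real.sq_sqrt (hlam _)]
    _ ≤ Fintype.card n * V ^ 2 * ∑ j, lam j * x j ^ 2 :=
        mul_le_mul_of_nonneg_right hv2 (sum_nonneg fun j _ => mul_nonneg (hlam j) (sq_nonneg _))

lemma sqrt_mul_sqrt_min_div_max_le {a b : ℝ} (ha : 0 < a) (hb : 0 < b) :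
    √b * √(min a b / max a b) ≤ √a := by
  rw [← Real.sqrt_mul hb.le]
  refine Real.sqrt_le_sqrt ?_
  rcases le_total a b with hab | hba
  · rw [min_eq_left hab, max_eq_right hab, mul_div_cancel₀ a hb.ne']
  · rw [min_eq_right hba, max_eq_left hba, ← mul_div_assoc, div_le_iff₀ ha]
    nlinarith

lemma abs_dotProduct_le_of_abs_le_sqrt_min_div_max (hlam : ∀ j, 0 < lam j) {v u : n → ℝ}
    {V C : ℝ} {k : n} (hC : 0 ≤ C) (hv : ∀ j, |v j| ≤ V)
    (hu : ∀ j, |u j| ≤ C * √(min (lam k) (lam j) / max (lam k) (lam j))) :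
    |(fun j => √(lam j) * v j) ⬝ᵥ u| ≤ Fintype.card n * V * C * √(lam k) := by
  have hterm : ∀ j, |√(lam j) * v j * u j| ≤ V * C * √(lam k) := fun j => by
    have hV : 0 ≤ V := (abs_nonneg _).trans (hv j)
    calc |√(lam j) * v j * u j| = √(lam j) * |v j| * |u j| := by
          rw [abs_mul, abs_mul, abs_of_nonneg (Real.sqrt_nonneg _)]
      _ ≤ √(lam j) * V * (C * √(min (lam k) (lam j) / max (lam k) (lam j))) := by
          gcongr; exacts [hv j, hu j]
      _ = V * C * (√(lam j) * √(min (lam k) (lam j) / max (lam k) (lam j))) := by ring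
      _ ≤ V * C * √(lam k) := by
          gcongr; exact sqrt_mul_sqrt_min_div_max_le (hlam k) (hlam j)
  calc |(fun j => √(lam j) * v j) ⬝ᵥ u| ≤ ∑ j, |√(lam j) * v j * u j| := abs_sum_le_sum_abs _ _
    _ ≤ Fintype.card n * V * C * √(lam k) := by
        simpa [mul_assoc] using sum_le_sum fun j (_ : j ∈ univ) => hterm j

end EntryBounds

lemma le_two_mul_sqrt_div_of_gap {a b ν ν' x c K : ℝ} (ha : 0 < a) (hb : 0 < b) (hc : 1 ≤ c)
    (hx₀ : 0 ≤ x) (hx₁ : x ≤ 1) (hν' : a ≤ ν') (hν : ν ≤ K * b)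
    (hgap : |ν' - ν| * x ≤ c * √K * √a * √b) :
    x ≤ 2 * c * √K * √(b / a) := by
  rcases le_or_gt (2 * K * b) a with hfar | hnear
  · have hsa : 0 < √a := Real.sqrt_pos.mpr ha
    have hhalf : a / 2 * x ≤ c * √K * √a * √b := by
      refine le_trans ?_ hgap
      gcongr
      rw [abs_of_nonneg (by linarith)]
      linarith
    rw [Real.sqrt_div' _ ha.le, ← mul_div_assoc, le_div_iff₀ hsa]
    refine le_of_mul_le_mul_right ?_ hsa
    nlinarith [Real.mul_self_sqrt ha.le]
  · have hK : 0 < K := by nlinarith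
    have hratio : 1 / 2 ≤ √(K * (b / a)) := by
      rw [Real.le_sqrt (by norm_num) (by positivity), ← mul_div_assoc, le_div_iff₀ ha]
      linarith
    calc x ≤ 2 * 1 * (1 / 2) := by linarith
      _ ≤ 2 * c * √(K * (b / a)) := by gcongr
      _ = 2 * c * √K * √(b / a) := by rw [Real.sqrt_mul hK.le]; ring

lemma le_two_mul_sqrt_min_div_max_of_gap {a b ν ν' x c K : ℝ} (ha : 0 < a) (hb : 0 < b)
    (hc : 1 ≤ c) (hx₀ : 0 ≤ x) (hx₁ : x ≤ 1) (hν : b ≤ ν ∧ ν ≤ K * b)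
    (hν' : a ≤ ν' ∧ ν' ≤ K * a) (hgap : |ν' - ν| * x ≤ c * √K * √a * √b) :
    x ≤ 2 * c * √K * √(min a b / max a b) := by
  rcases le_total b a with hba | hab
  · rw [min_eq_right hba, max_eq_left hba]
    exact le_two_mul_sqrt_div_of_gap ha hb hc hx₀ hx₁ hν'.1 hν.2 hgap
  · rw [min_eq_left hab, max_eq_right hab]
    refine le_two_mul_sqrt_div_of_gap hb ha hc hx₀ hx₁ hν.1 hν'.2 ?_
    rwa [abs_sub_comm, mul_right_comm _ √b]

lemma one_le_mul_sq_of_one_div_sqrt_le {d V : ℝ} (hd : 0 < d) (hV : 1 / √d ≤ V) :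
    1 ≤ d * V ^ 2 := by
  rw [div_le_iff₀ (Real.sqrt_pos.mpr hd)] at hV
  calc 1 ≤ (V * √d) ^ 2 := one_le_pow₀ hV
    _ = d * V ^ 2 := by rw [mul_pow, Real.sq_sqrt hd.le, mul_comm]

lemma two_mul_sqrt_le_of_one_le {d m V C : ℝ} (hd : 1 ≤ d) (hm : 0 ≤ m) (hV : 0 ≤ V)
    (hdV : 1 ≤ d * V ^ 2) (hC : 1 ≤ C) :
    2 * (d * V * C) * √(1 + (m + 1) * (d * V ^ 2))
      ≤ 5 * d ^ 6 * V ^ 4 * C ^ 4 * √(1 + d * m * V ^ 2) := by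
  set t := d * V ^ 2
  have hK : √(1 + (m + 1) * t) ≤ 2 * t * √(1 + d * m * V ^ 2) := by
    rw [← Real.sqrt_sq (by positivity : 0 ≤ 2 * t), ← Real.sqrt_mul (by positivity)]
    refine Real.sqrt_le_sqrt ?_
    have hmt : d * m * V ^ 2 = m * t := by ring
    rw [hmt]
    nlinarith [mul_le_mul_of_nonneg_left hdV (by positivity : 0 ≤ m * t)]
  have hdV₁ : 1 ≤ d * V := by nlinarith
  have hdVt : d * V ≤ d * t := by nlinarith
  have hcoef : 4 * d * t ^ 2 * C ≤ 5 * d ^ 6 * V ^ 4 * C ^ 4 := by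
    have hd3 : d ^ 3 ≤ d ^ 6 := pow_le_pow_right₀ hd (by norm_num)
    have hC4 : C ≤ C ^ 4 := le_self_pow₀ hC (by norm_num)
    calc 4 * d * t ^ 2 * C = 4 * V ^ 4 * (d ^ 3 * C) := by ring
      _ ≤ 5 * V ^ 4 * (d ^ 6 * C ^ 4) := by gcongr; norm_num
      _ = 5 * d ^ 6 * V ^ 4 * C ^ 4 := by ring
  calc 2 * (d * V * C) * √(1 + (m + 1) * t)
      ≤ 2 * (d * V * C) * (2 * t * √(1 + d * m * V ^ 2)) := by gcongr
    _ ≤ 2 * (d * t * C) * (2 * t * √(1 + d * m * V ^ 2)) := by gcongr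
    _ = 4 * d * t ^ 2 * C * √(1 + d * m * V ^ 2) := by ring
    _ ≤ 5 * d ^ 6 * V ^ 4 * C ^ 4 * √(1 + d * m * V ^ 2) := by gcongr

section RankOneUpdate

variable {n : Type*} [Fintype n] [DecidableEq n] [LinearOrder n] {m : ℕ} {lam : n → ℝ}
  {w : Fin (m + 1) → n → ℝ} {c C : ℝ} {A : Matrix n n ℝ} {μ ν : n → ℝ} {e f : n → n → ℝ}

theorem abs_dotProduct_eigenvector_le_of_add_vecMulVec (hlam : Antitone lam)
    (hlam_pos : ∀ j, 0 < lam j) (hc : 0 ≤ c) (hC : 1 ≤ C)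
    (hw : ∀ l x, (w l ⬝ᵥ x) ^ 2 ≤ c * (x ⬝ᵥ diagonal lam *ᵥ x))
    (hA : A = diagonal lam + ∑ l : Fin m, vecMulVec (w l.castSucc) (w l.castSucc))
    (he : ∀ i j, e i ⬝ᵥ e j = if i = j then (1 : ℝ) else 0)
    (hf : ∀ i j, f i ⬝ᵥ f j = if i = j then (1 : ℝ) else 0)
    (heig : ∀ i, A *ᵥ e i = μ i • e i)
    (hfeig : ∀ i, (A + vecMulVec (w (Fin.last m)) (w (Fin.last m))) *ᵥ f i = ν i • f i)
    (hμ : Antitone μ) (hν : Antitone ν) (hwe : ∀ k, |w (Fin.last m) ⬝ᵥ e k| ≤ C * √(lam k))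
    (i k : n) :
    |f i ⬝ᵥ e k| ≤ 2 * C * √(1 + (m + 1) * c) * √(min (lam i) (lam k) / max (lam i) (lam k)) := by
  subst hA
  set K := 1 + (m + 1) * c
  have hA' : diagonal lam + ∑ l : Fin m, vecMulVec (w l.castSucc) (w l.castSucc)
      + vecMulVec (w (Fin.last m)) (w (Fin.last m))
      = diagonal lam + ∑ l, vecMulVec (w l) (w l) := by
    rw [Fin.sum_univ_castSucc, add_assoc]
  have hμk : lam k ≤ μ k ∧ μ k ≤ K * lam k := by
    obtain ⟨h₁, h₂⟩ := eigenvalue_mem_Icc_of_diagonal_add_sum_vecMulVec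
      (w := fun l : Fin m => w l.castSucc) hlam hc (fun l => hw l.castSucc) he heig hμ k
    refine ⟨h₁, h₂.trans ?_⟩
    rw [Fintype.card_fin]
    gcongr
    exacts [(hlam_pos k).le, by linarith]
  have hνi : lam i ≤ ν i ∧ ν i ≤ K * lam i := by
    simpa [K] using eigenvalue_mem_Icc_of_diagonal_add_sum_vecMulVec hlam hc hw hf
      (fun j => hA' ▸ hfeig j) hν i
  have hwf : |w (Fin.last m) ⬝ᵥ f i| ≤ √K * √(lam i) := by
    rw [← Real.sqrt_mul (by positivity)]
    refine Real.abs_le_sqrt ((sq_dotProduct_le_of_add_vecMulVec ?_ (by simpa using hf i i)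
      (hfeig i)).trans hνi.2)
    exact dotProduct_diagonal_add_sum_vecMulVec_mulVec_self_nonneg
      (w := fun l : Fin m => w l.castSucc) fun j => (hlam_pos j).le
  have hgap : |ν i - μ k| * |f i ⬝ᵥ e k| ≤ C * √K * √(lam i) * √(lam k) := by
    rw [← abs_mul, sub_mul_dotProduct_eq_of_add_vecMulVec
      (isSymm_diagonal_add_sum_vecMulVec _ _) (heig k) (hfeig i), abs_mul]
    calc _ ≤ √K * √(lam i) * (C * √(lam k)) := by gcongr; exact hwe k
      _ = C * √K * √(lam i) * √(lam k) := by ring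
  exact le_two_mul_sqrt_min_div_max_of_gap (hlam_pos i) (hlam_pos k) hC (abs_nonneg _)
    (abs_dotProduct_le_one (by simpa using hf i i) (by simpa using he k k)) hμk hνi hgap

end RankOneUpdate

theorem eigenvector_bound_induction_step_general
    {d m : ℕ}
    (lam : Fin d → ℝ) (hlam_anti : Antitone lam) (hlam_pos : ∀ i, 0 < lam i)
    (V : ℝ) (hV : 1 / Real.sqrt d ≤ V)
    (v : Fin (m + 1) → Fin d → ℝ) (hv : ∀ k j, |v k j| ≤ V)
    (Am Am1 : Matrix (Fin d) (Fin d) ℝ)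
    (hAm : Am = Matrix.diagonal lam +
      (Matrix.diagonal fun i => Real.sqrt (lam i)) *
        (∑ k : Fin m, Matrix.vecMulVec (v k.castSucc) (v k.castSucc)) *
      (Matrix.diagonal fun i => Real.sqrt (lam i)))
    (hAm1 : Am1 = Am +
      (Matrix.diagonal fun i => Real.sqrt (lam i)) *
        Matrix.vecMulVec (v (Fin.last m)) (v (Fin.last m)) *
      (Matrix.diagonal fun i => Real.sqrt (lam i)))
    (νm νm1 : Fin d → ℝ) (hνm_anti : Antitone νm) (hνm1_anti : Antitone νm1)
    (em em1 : Fin d → Fin d → ℝ)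
    (hem_orth : ∀ i j, em i ⬝ᵥ em j = if i = j then (1 : ℝ) else 0)
    (hem_eig : ∀ i, Am.mulVec (em i) = νm i • em i)
    (hem1_orth : ∀ i j, em1 i ⬝ᵥ em1 j = if i = j then (1 : ℝ) else 0)
    (hem1_eig : ∀ i, Am1.mulVec (em1 i) = νm1 i • em1 i)
    (Cm : ℝ) (hCm : 1 ≤ Cm)
    (hbound : ∀ i j : Fin d,
      |em i j| ≤ Cm * Real.sqrt (min (lam i) (lam j) / max (lam i) (lam j))) :
    ∀ i k : Fin d,
      |em1 i ⬝ᵥ em k| ≤ 5 * (d : ℝ) ^ 6 * V ^ 4 * Cm ^ 4 *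
        Real.sqrt (1 + (d : ℝ) * (m : ℝ) * V ^ 2) *
        Real.sqrt (min (lam i) (lam k) / max (lam i) (lam k)) := by
  intro i k
  have hd : (1 : ℝ) ≤ d := by exact_mod_cast i.pos
  have hV₀ : 0 ≤ V := (abs_nonneg _).trans (hv 0 i)
  have hdV : 1 ≤ d * V ^ 2 := one_le_mul_sq_of_one_div_sqrt_le (by positivity) hV
  have hdV₁ : 1 ≤ d * V := by nlinarith [mul_le_mul hd hdV zero_le_one (by positivity)]
  have hdVCm : 1 ≤ d * V * Cm := one_le_mul_of_one_le_of_one_le hdV₁ hCm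
  set w : Fin (m + 1) → Fin d → ℝ := fun l j => √(lam j) * v l j
  have hAm' : Am = diagonal lam + ∑ l : Fin m, vecMulVec (w l.castSucc) (w l.castSucc) := by
    simp only [hAm, mul_sum, sum_mul, diagonal_mul_vecMulVec_mul_diagonal, w]
  have hAm1' : Am1 = Am + vecMulVec (w (Fin.last m)) (w (Fin.last m)) := by
    rw [hAm1, diagonal_mul_vecMulVec_mul_diagonal]
  have hw : ∀ l x, (w l ⬝ᵥ x) ^ 2 ≤ d * V ^ 2 * (x ⬝ᵥ diagonal lam *ᵥ x) := fun l x => by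
    simpa using sq_dotProduct_sqrt_mul_le (fun j => (hlam_pos j).le) (hv l) x
  have hwe : ∀ k, |w (Fin.last m) ⬝ᵥ em k| ≤ d * V * Cm * √(lam k) := fun k => by
    simpa using abs_dotProduct_le_of_abs_le_sqrt_min_div_max hlam_pos (by linarith)
      (hv (Fin.last m)) (hbound k)
  calc |em1 i ⬝ᵥ em k|
      ≤ 2 * (d * V * Cm) * √(1 + (m + 1) * (d * V ^ 2)) *
          √(min (lam i) (lam k) / max (lam i) (lam k)) :=
        abs_dotProduct_eigenvector_le_of_add_vecMulVec hlam_anti hlam_pos (by positivity) hdVCm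
          hw hAm' hem_orth hem1_orth hem_eig (fun j => hAm1' ▸ hem1_eig j) hνm_anti hνm1_anti
          hwe i k
    _ ≤ _ := mul_le_mul_of_nonneg_right
        (two_mul_sqrt_le_of_one_le hd m.cast_nonneg hV₀ hdV hCm) (Real.sqrt_nonneg _)

/-- **Induction step of Theorem 2:** if the eigenvectors of
`A⁽ᵐ⁾ = D + √D (∑_{k<m} v⁽ᵏ⁾(v⁽ᵏ⁾)ᵀ) √D` satisfy
`|[eᵢ⁽ᵐ⁾]_j| ≤ Cₘ √(min(λᵢ,λⱼ)/max(λᵢ,λⱼ))`, then the eigenvectors of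
`A⁽ᵐ⁺¹⁾ = A⁽ᵐ⁾ + √D v⁽ᵐ⁺¹⁾(v⁽ᵐ⁺¹⁾)ᵀ √D` satisfy
`|⟨eᵢ⁽ᵐ⁺¹⁾, eₖ⁽ᵐ⁾⟩| ≤ 5 d⁶ V⁴ Cₘ⁴ √(1 + d m V²) √(min(λᵢ,λₖ)/max(λᵢ,λₖ))`. -/
theorem eigenvector_bound_induction_step
    {d m : ℕ} (hd : 0 < d)
    (lam : Fin d → ℝ) (hlam_anti : Antitone lam) (hlam_pos : ∀ i, 0 < lam i)
    (V : ℝ) (hV : 1 / Real.sqrt d ≤ V)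
    (v : Fin (m + 1) → Fin d → ℝ) (hv : ∀ k j, |v k j| ≤ V)
    (Am Am1 : Matrix (Fin d) (Fin d) ℝ)
    (hAm : Am = Matrix.diagonal lam +
      (Matrix.diagonal fun i => Real.sqrt (lam i)) *
        (∑ k : Fin m, Matrix.vecMulVec (v k.castSucc) (v k.castSucc)) *
      (Matrix.diagonal fun i => Real.sqrt (lam i)))
    (hAm1 : Am1 = Am +
      (Matrix.diagonal fun i => Real.sqrt (lam i)) *
        Matrix.vecMulVec (v (Fin.last m)) (v (Fin.last m)) *
      (Matrix.diagonal fun i => Real.sqrt (lam i)))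
    (νm νm1 : Fin d → ℝ) (hνm_anti : Antitone νm) (hνm1_anti : Antitone νm1)
    (em em1 : Fin d → Fin d → ℝ)
    (hem_orth : ∀ i j, em i ⬝ᵥ em j = if i = j then (1 : ℝ) else 0)
    (hem_eig : ∀ i, Am.mulVec (em i) = νm i • em i)
    (hem1_orth : ∀ i j, em1 i ⬝ᵥ em1 j = if i = j then (1 : ℝ) else 0)
    (hem1_eig : ∀ i, Am1.mulVec (em1 i) = νm1 i • em1 i)
    (Cm : ℝ) (hCm : 1 ≤ Cm)
    (hbound : ∀ i j : Fin d,
      |em i j| ≤ Cm * Real.sqrt (min (lam i) (lam j) / max (lam i) (lam j))) :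
    ∀ i k : Fin d,
      |em1 i ⬝ᵥ em k| ≤ 5 * (d : ℝ) ^ 6 * V ^ 4 * Cm ^ 4 *
        Real.sqrt (1 + (d : ℝ) * (m : ℝ) * V ^ 2) *
        Real.sqrt (min (lam i) (lam k) / max (lam i) (lam k)) :=
  eigenvector_bound_induction_step_general lam hlam_anti hlam_pos V hV v hv Am Am1 hAm hAm1 νm νm1
    hνm_anti hνm1_anti em em1 hem_orth hem_eig hem1_orth hem1_eig Cm hCm hbound
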